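/- Let r ≥ m(m−1)/2 and let W = ℝ^r. Let H ⊆ W ⊗ S²(ℝ^m) be the open set of W-valued symmetric bilinear forms h = (h_{ij}) such that the vectors {h_{ij} : 1 ≤ i ≤ j ≤ m−1} are linearly independent in W. Then the Gauss map γ: H → K_m defined by γ(h)_{ijkl} = ⟨h_{ik}, h_{jl}⟩ − ⟨h_{il}, h_{jk}⟩ is a surjective submersion onto the space K_m of algebraic curvature tensors. -/

import Mathlib

/-!
The differential of `γ` at `h` is `v ↦ G(h, v) + G(v, h)` with `G = gaussForm`,
`G(g, h)_{ijkl} = ⟨g_{ik}, h_{jl}⟩ - ⟨g_{il}, h_{jk}⟩`. When the `h_{ab}`, `a ≤ b < n := m - 1`, are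
linearly independent, the inner products `⟨v_{ij}, h_{ab}⟩` can be prescribed at will, and an
algebraic curvature tensor is determined by its components `R_{abcd}`, `R_{abcn}`, `R_{ancn}`
(`a, b, c, d < n`). Prescribing the blocks of `v` one after the other (`v_{ac}` through the
symmetrization `(R_{abcd} + R_{adcb}) / 6`, which determines `R`, then `v_{an}`, then `v_{nn}`)
solves the linearized Gauss equation, so `γ` is a submersion on `H`.

For surjectivity, let `h⁰_{ij} = ∑_p u_p(i) u_p(j) e_p` with `(e_p)` orthonormal and `u_p` the
indicator of `{a, b}` for `p = (a ≤ b < n)`. Then `γ(h⁰) = 0` and `h⁰ ∈ H`, so by the inverse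
function theorem `γ(H)` is a neighbourhood of `0` in `K_m`; as `H` is a cone and
`γ(t h) = t² γ(h)`, it is all of `K_m`.
-/

open RealInnerProductSpace

theorem LinearIndependent.exists_inner_eq {E : Type*} [NormedAddCommGroup E]
    [InnerProductSpace ℝ E] {κ : Type*} [Fintype κ] {f : κ → E}
    (hf : LinearIndependent ℝ f) (c : κ → ℝ) : ∃ x : E, ∀ i, ⟪x, f i⟫ = c i := by
  set U := Submodule.span ℝ (Set.range f)
  let Φ : U →ₗ[ℝ] κ → ℝ := LinearMap.pi fun i => (innerₛₗ ℝ (f i)).comp U.subtype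
  have hΦ : Function.Injective Φ := by
    rw [← LinearMap.ker_eq_bot, Submodule.eq_bot_iff]
    rintro ⟨x, hxU⟩ hx
    obtain ⟨a, rfl⟩ := (Submodule.mem_span_range_iff_exists_fun ℝ).mp hxU
    have hperp : ∀ i, ⟪f i, ∑ j, a j • f j⟫ = 0 := fun i => congrFun hx i
    have : ⟪∑ j, a j • f j, ∑ j, a j • f j⟫ = 0 := by
      simp only [sum_inner, inner_smul_left, hperp, mul_zero, Finset.sum_const_zero]
    exact Subtype.ext (inner_self_eq_zero.mp this)
  have : FiniteDimensional ℝ U := .span_of_finite ℝ (Set.finite_range f)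
  have hdim : Module.finrank ℝ U = Module.finrank ℝ (κ → ℝ) := by
    simp [U, finrank_span_eq_card hf]
  obtain ⟨x, hx⟩ := (LinearMap.injective_iff_surjective_of_finrank_eq_finrank hdim).mp hΦ c
  exact ⟨x, fun i => by rw [real_inner_comm]; exact congrFun hx i⟩

theorem HasStrictFDerivAt.codRestrict {𝕜 E F : Type*} [NontriviallyNormedField 𝕜]
    [NormedAddCommGroup E] [NormedSpace 𝕜 E] [NormedAddCommGroup F] [NormedSpace 𝕜 F]
    {f : E → F} {f' : E →L[𝕜] F} {x : E} (hf : HasStrictFDerivAt f f' x) (K : Submodule 𝕜 F)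
    (hK : ∀ y, f y ∈ K) (hK' : ∀ v, f' v ∈ K) :
    HasStrictFDerivAt (fun y => (⟨f y, hK y⟩ : K)) (f'.codRestrict K hK') x := by
  rw [hasStrictFDerivAt_iff_isLittleO, Asymptotics.isLittleO_iff] at hf ⊢
  intro c hc
  filter_upwards [hf hc] with p hp
  simpa using hp

theorem exists_mem_eq_of_hasStrictFDerivAt_of_homogeneous {E F : Type*}
    [NormedAddCommGroup E] [NormedSpace ℝ E] [CompleteSpace E]
    [NormedAddCommGroup F] [NormedSpace ℝ F] [CompleteSpace F]
    {f : E → F} (hf : ∀ (t : ℝ) x, f (t • x) = t ^ 2 • f x)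
    {U : Set E} (hU : IsOpen U) (hUsmul : ∀ t : ℝ, t ≠ 0 → ∀ x ∈ U, t • x ∈ U)
    {x₀ : E} (hx₀ : x₀ ∈ U) (hfx₀ : f x₀ = 0) {f' : E →L[ℝ] F}
    (hf' : HasStrictFDerivAt f f' x₀) (hsurj : (f' : E →ₗ[ℝ] F).range = ⊤) (y : F) :
    ∃ x ∈ U, f x = y := by
  have himage : f '' U ∈ nhds (0 : F) := by
    rw [← hfx₀, ← hf'.map_nhds_eq_of_surj hsurj]
    exact Filter.image_mem_map (hU.mem_nhds hx₀)
  have hsmall : ∀ᶠ t in nhdsWithin (0 : ℝ) (Set.Ioi 0), t • y ∈ f '' U :=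
    nhdsWithin_le_nhds <|
      ((continuous_id.smul continuous_const).tendsto' 0 0 (zero_smul ℝ y)).eventually_mem himage
  obtain ⟨t, ⟨x, hxU, hx⟩, ht⟩ := (hsmall.and self_mem_nhdsWithin).exists
  refine ⟨(Real.sqrt t)⁻¹ • x, hUsmul _ (by positivity) x hxU, ?_⟩
  rw [hf, hx, smul_smul, inv_pow, Real.sq_sqrt (le_of_lt ht), inv_mul_cancel₀ (ne_of_gt ht),
    one_smul]

namespace Gauss

section Tensors

variable {ι : Type*}

variable (ι) in
def curvatureTensors : Submodule ℝ (ι → ι → ι → ι → ℝ) where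
  carrier := {R | (∀ i j k l, R i j k l = R k l i j) ∧
    (∀ i j k l, R i j k l = - R j i k l) ∧
    (∀ i j k l, R i j k l + R k i j l + R j k i l = 0)}
  add_mem' := by
    rintro R S ⟨hR₁, hR₂, hR₃⟩ ⟨hS₁, hS₂, hS₃⟩
    refine ⟨fun i j k l => ?_, fun i j k l => ?_, fun i j k l => ?_⟩ <;> simp only [Pi.add_apply]
    · rw [hR₁, hS₁]
    · rw [hR₂, hS₂]; ring
    · linarith [hR₃ i j k l, hS₃ i j k l]
  zero_mem' := ⟨fun _ _ _ _ => rfl, fun _ _ _ _ => by simp, fun _ _ _ _ => by simp⟩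
  smul_mem' := by
    rintro c R ⟨hR₁, hR₂, hR₃⟩
    refine ⟨fun i j k l => ?_, fun i j k l => ?_, fun i j k l => ?_⟩ <;>
      simp only [Pi.smul_apply, smul_eq_mul]
    · rw [hR₁]
    · rw [hR₂]; ring
    · rw [← mul_add, ← mul_add, hR₃, mul_zero]

theorem apply_eq_sum_symmetrized {R : ι → ι → ι → ι → ℝ} (hR : R ∈ curvatureTensors ι)
    (a b c d : ι) :
    R a b c d = ((R a b c d + R a d c b) + (R b a d c + R b c d a)
      - (R b a c d + R b d c a) - (R a b d c + R a c d b)) / 6 := by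
  obtain ⟨hpair, hskew, hbianchi⟩ := hR
  have hskew' : ∀ i j k l, R i j k l = - R i j l k := fun i j k l => by
    rw [hpair, hskew, hpair]
  -- By the symmetries the numerator is `4 R_abcd + 2 R_adcb - 2 R_acdb`, and the Bianchi identity
  -- in the last three slots, `R_abcd + R_acdb + R_adbc = 0`, turns it into `6 R_abcd`.
  linarith [hskew b a d c, hskew' a b d c, hskew b a c d, hpair b c d a, hskew d a b c,
    hskew' a d b c, hpair b d c a, hskew c a b d, hskew' a c b d, hskew' a d c b,
    hbianchi d c b a, hpair a b c d, hskew c d a b, hskew' d c a b, hpair a c d b, hskew d b a c,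
    hskew' b d a c, hpair a d b c, hskew b c a d, hskew' c b a d]

theorem curvatureTensors_eq_zero_of_castSucc {n : ℕ}
    {X : Fin (n + 1) → Fin (n + 1) → Fin (n + 1) → Fin (n + 1) → ℝ}
    (hX : X ∈ curvatureTensors (Fin (n + 1)))
    (h₀ : ∀ a b c d : Fin n, X a.castSucc b.castSucc c.castSucc d.castSucc = 0)
    (h₁ : ∀ a b c : Fin n, X a.castSucc b.castSucc c.castSucc (Fin.last n) = 0)
    (h₂ : ∀ a c : Fin n, X a.castSucc (Fin.last n) c.castSucc (Fin.last n) = 0) : X = 0 := by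
  obtain ⟨hpair, hskew, -⟩ := hX
  have hskew' : ∀ i j k l, X i j k l = - X i j l k := fun i j k l => by
    rw [hpair, hskew, hpair]
  funext i j k l
  simp only [Pi.zero_apply]
  induction i using Fin.lastCases <;> induction j using Fin.lastCases <;>
    induction k using Fin.lastCases <;> induction l using Fin.lastCases <;> grind

variable {E : Type*} [NormedAddCommGroup E] [InnerProductSpace ℝ E]

variable (ι E) in
def symmetricForms : Submodule ℝ (ι → ι → E) where
  carrier := {h | ∀ i j, h i j = h j i}
  add_mem' hg hh i j := by simp [hg i j, hh i j]
  zero_mem' _ _ := rfl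
  smul_mem' c h hh i j := by simp [hh i j]

def gaussForm (g h : ι → ι → E) : ι → ι → ι → ι → ℝ :=
  fun i j k l => ⟪g i k, h j l⟫ - ⟪g i l, h j k⟫

theorem gaussForm_self_mem {h : ι → ι → E} (hh : h ∈ symmetricForms ι E) :
    gaussForm h h ∈ curvatureTensors ι := by
  refine ⟨fun i j k l => ?_, fun i j k l => ?_, fun i j k l => ?_⟩ <;> simp only [gaussForm]
  · rw [hh k i, hh l j, hh k j, hh l i, real_inner_comm (h j k)]
  · rw [real_inner_comm (h j k), real_inner_comm (h j l)]; ring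
  · rw [hh k j, hh k l, hh j i, hh k i, real_inner_comm (h j k) (h i l),
      real_inner_comm (h i j) (h l k), real_inner_comm (h j l) (h i k)]
    ring

theorem gaussForm_add_gaussForm (h v : ι → ι → E) :
    gaussForm h v + gaussForm v h = gaussForm (h + v) (h + v) - gaussForm h h - gaussForm v v := by
  funext i j k l
  simp only [gaussForm, Pi.add_apply, Pi.sub_apply, inner_add_left, inner_add_right]
  ring

theorem gaussForm_add_gaussForm_mem {h v : ι → ι → E} (hh : h ∈ symmetricForms ι E)
    (hv : v ∈ symmetricForms ι E) : gaussForm h v + gaussForm v h ∈ curvatureTensors ι := by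
  rw [gaussForm_add_gaussForm]
  exact sub_mem (sub_mem (gaussForm_self_mem (add_mem hh hv)) (gaussForm_self_mem hh))
    (gaussForm_self_mem hv)

theorem gaussForm_smul_smul (t : ℝ) (h : ι → ι → E) :
    gaussForm (t • h) (t • h) = t ^ 2 • gaussForm h h := by
  funext i j k l
  simp only [gaussForm, Pi.smul_apply, real_inner_smul_left, real_inner_smul_right, smul_eq_mul]
  ring

theorem isBilinearMap_gaussForm : IsBilinearMap ℝ (gaussForm (ι := ι) (E := E)) where
  add_left _ _ _ := by funext; simp only [gaussForm, Pi.add_apply, inner_add_left]; ring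
  smul_left _ _ _ := by funext; simp only [gaussForm, Pi.smul_apply, real_inner_smul_left]; ring
  add_right _ _ _ := by funext; simp only [gaussForm, Pi.add_apply, inner_add_right]; ring
  smul_right _ _ _ := by funext; simp only [gaussForm, Pi.smul_apply, real_inner_smul_right]; ring

variable [Fintype ι] [FiniteDimensional ℝ E]

noncomputable def gaussDeriv (h : ι → ι → E) : (ι → ι → E) →L[ℝ] ι → ι → ι → ι → ℝ :=
  isBilinearMap_gaussForm.toContinuousBilinearMap h +
    isBilinearMap_gaussForm.toContinuousBilinearMap.flip h

theorem gaussDeriv_apply (h v : ι → ι → E) : gaussDeriv h v = gaussForm h v + gaussForm v h :=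
  rfl

theorem hasStrictFDerivAt_gaussForm_self (h : ι → ι → E) :
    HasStrictFDerivAt (fun g => gaussForm g g) (gaussDeriv h) h := by
  refine (isBilinearMap_gaussForm.toContinuousBilinearMap.hasStrictFDerivAt_of_bilinear
    (hasStrictFDerivAt_id h) (hasStrictFDerivAt_id h)).congr_fderiv ?_
  ext v : 1
  simp [gaussDeriv]

end Tensors

abbrev UpperPairs (n : ℕ) := {q : Fin n × Fin n // q.1 ≤ q.2}

noncomputable section LinearizedEquation

variable {E : Type*} {n : ℕ} (R : Fin (n + 1) → Fin (n + 1) → Fin (n + 1) → Fin (n + 1) → ℝ)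
  (sol : (Fin n → Fin n → ℝ) → E)

def smallComponents (h : Fin (n + 1) → Fin (n + 1) → E) : UpperPairs n → E :=
  fun q => h q.1.1.castSucc q.1.2.castSucc

def preimageSmall (a c : Fin n) : E :=
  sol fun b d => (R a.castSucc b.castSucc c.castSucc d.castSucc
    + R a.castSucc d.castSucc c.castSucc b.castSucc) / 6

variable {R sol} in
theorem preimageSmall_comm (hR : R ∈ curvatureTensors _) (a c : Fin n) :
    preimageSmall R sol a c = preimageSmall R sol c a := by
  unfold preimageSmall
  congr 1
  funext b d
  rw [hR.1 c.castSucc, hR.1 c.castSucc, add_comm]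

variable [NormedAddCommGroup E] [InnerProductSpace ℝ E] (h : Fin (n + 1) → Fin (n + 1) → E)

def IsInnerRightInverse : Prop :=
  ∀ c : Fin n → Fin n → ℝ, (∀ a b, c a b = c b a) →
    ∀ a b, ⟪sol c, h a.castSucc b.castSucc⟫ = c a b

def preimageMixed (a : Fin n) : E :=
  sol fun b c => (R b.castSucc a.castSucc c.castSucc (Fin.last n)
    + R c.castSucc a.castSucc b.castSucc (Fin.last n)) / 3
    - ⟪preimageSmall R sol b c, h a.castSucc (Fin.last n)⟫

def preimageLast : E :=
  sol fun a c => R a.castSucc (Fin.last n) c.castSucc (Fin.last n)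
    - ⟪preimageSmall R sol a c, h (Fin.last n) (Fin.last n)⟫
    + ⟪preimageMixed R sol h a, h c.castSucc (Fin.last n)⟫
    + ⟪preimageMixed R sol h c, h a.castSucc (Fin.last n)⟫

def derivPreimage : Fin (n + 1) → Fin (n + 1) → E :=
  fun i j => Fin.lastCases (Fin.lastCases (preimageLast R sol h) (preimageMixed R sol h) j)
    (fun a => Fin.lastCases (preimageMixed R sol h a) (preimageSmall R sol a) j) i

variable {R sol h}

theorem exists_isInnerRightInverse (hh : h ∈ symmetricForms _ E)
    (hind : LinearIndependent ℝ (smallComponents h)) :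
    ∃ sol : (Fin n → Fin n → ℝ) → E, IsInnerRightInverse sol h := by
  choose sol hsol using fun c : Fin n → Fin n → ℝ => hind.exists_inner_eq fun q => c q.1.1 q.1.2
  refine ⟨sol, fun c hc a b => ?_⟩
  rcases le_total a b with hab | hba
  · exact hsol c ⟨(a, b), hab⟩
  · rw [hh, hc]
    exact hsol c ⟨(b, a), hba⟩

theorem derivPreimage_mem (hR : R ∈ curvatureTensors _) :
    derivPreimage R sol h ∈ symmetricForms _ E := by
  intro i j
  induction i using Fin.lastCases <;> induction j using Fin.lastCases <;>
    simp [derivPreimage, preimageSmall_comm hR]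

theorem IsInnerRightInverse.inner_preimageSmall (hsol : IsInnerRightInverse sol h)
    (a c b d : Fin n) :
    ⟪preimageSmall R sol a c, h b.castSucc d.castSucc⟫ =
      (R a.castSucc b.castSucc c.castSucc d.castSucc
        + R a.castSucc d.castSucc c.castSucc b.castSucc) / 6 :=
  hsol _ (fun _ _ => by rw [add_comm]) b d

theorem IsInnerRightInverse.inner_preimageMixed (hsol : IsInnerRightInverse sol h)
    (hR : R ∈ curvatureTensors _) (a b c : Fin n) :
    ⟪preimageMixed R sol h a, h b.castSucc c.castSucc⟫ =
      (R b.castSucc a.castSucc c.castSucc (Fin.last n)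
        + R c.castSucc a.castSucc b.castSucc (Fin.last n)) / 3
        - ⟪preimageSmall R sol b c, h a.castSucc (Fin.last n)⟫ :=
  hsol _ (fun _ _ => by rw [add_comm, preimageSmall_comm hR]) b c

theorem IsInnerRightInverse.inner_preimageLast (hsol : IsInnerRightInverse sol h)
    (hR : R ∈ curvatureTensors _) (a c : Fin n) :
    ⟪preimageLast R sol h, h a.castSucc c.castSucc⟫ =
      R a.castSucc (Fin.last n) c.castSucc (Fin.last n)
        - ⟪preimageSmall R sol a c, h (Fin.last n) (Fin.last n)⟫
        + ⟪preimageMixed R sol h a, h c.castSucc (Fin.last n)⟫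
        + ⟪preimageMixed R sol h c, h a.castSucc (Fin.last n)⟫ :=
  hsol _ (fun _ _ => by rw [hR.1 _ (Fin.last n), preimageSmall_comm hR]; ring) a c

theorem IsInnerRightInverse.gaussForm_add_gaussForm_derivPreimage
    (hsol : IsInnerRightInverse sol h) (hR : R ∈ curvatureTensors _)
    (hh : h ∈ symmetricForms _ E) :
    gaussForm h (derivPreimage R sol h) + gaussForm (derivPreimage R sol h) h = R := by
  rw [← sub_eq_zero]
  refine curvatureTensors_eq_zero_of_castSucc
    (sub_mem (gaussForm_add_gaussForm_mem hh (derivPreimage_mem hR)) hR) ?_ ?_ ?_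
  · intro a b c d
    simp only [Pi.sub_apply, Pi.add_apply, gaussForm, derivPreimage, Fin.lastCases_castSucc]
    rw [real_inner_comm (preimageSmall R sol b d), real_inner_comm (preimageSmall R sol b c),
      hsol.inner_preimageSmall, hsol.inner_preimageSmall, hsol.inner_preimageSmall,
      hsol.inner_preimageSmall]
    linarith [apply_eq_sum_symmetrized hR a.castSucc b.castSucc c.castSucc d.castSucc]
  · intro a b c
    simp only [Pi.sub_apply, Pi.add_apply, gaussForm, derivPreimage, Fin.lastCases_castSucc,
      Fin.lastCases_last]
    rw [real_inner_comm (preimageMixed R sol h b), real_inner_comm (preimageSmall R sol b c),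
      hsol.inner_preimageMixed hR, hsol.inner_preimageMixed hR]
    obtain ⟨-, hskew, hbianchi⟩ := hR
    linarith [hskew b.castSucc a.castSucc c.castSucc (Fin.last n),
      hskew b.castSucc c.castSucc a.castSucc (Fin.last n),
      hbianchi a.castSucc b.castSucc c.castSucc (Fin.last n)]
  · intro a c
    simp only [Pi.sub_apply, Pi.add_apply, gaussForm, derivPreimage, Fin.lastCases_castSucc,
      Fin.lastCases_last]
    rw [real_inner_comm (preimageLast R sol h), hsol.inner_preimageLast hR,
      real_inner_comm (preimageMixed R sol h c), hh (Fin.last n) c.castSucc]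
    ring

theorem exists_gaussForm_add_gaussForm_eq (hh : h ∈ symmetricForms _ E)
    (hind : LinearIndependent ℝ (smallComponents h)) (hR : R ∈ curvatureTensors _) :
    ∃ v ∈ symmetricForms _ E, gaussForm h v + gaussForm v h = R :=
  let ⟨_, hsol⟩ := exists_isInnerRightInverse hh hind
  ⟨_, derivPreimage_mem hR, hsol.gaussForm_add_gaussForm_derivPreimage hR hh⟩

end LinearizedEquation

section FlatPoint

variable {E : Type*} [NormedAddCommGroup E] [InnerProductSpace ℝ E]

theorem card_upperPairs (n : ℕ) : Fintype.card (UpperPairs n) = (n + 1) * n / 2 := by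
  rw [Fintype.card_congr Sym2.sortEquiv.symm, Sym2.card]
  simp [Nat.choose_two_right, Nat.mul_comm]

theorem exists_orthonormal_of_card_le [FiniteDimensional ℝ E] {κ : Type*} [Fintype κ]
    (hκ : Fintype.card κ ≤ Module.finrank ℝ E) : ∃ e : κ → E, Orthonormal ℝ e := by
  obtain ⟨ι⟩ : Nonempty (κ ↪ Fin (Module.finrank ℝ E)) :=
    Function.Embedding.nonempty_of_card_le (by simpa using hκ)
  exact ⟨stdOrthonormalBasis ℝ E ∘ ι, (stdOrthonormalBasis ℝ E).orthonormal.comp ι ι.injective⟩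

variable {ι κ : Type*} [Fintype κ]

def sumSquares (u : κ → ι → ℝ) (e : κ → E) : ι → ι → E :=
  fun i j => ∑ p, (u p i * u p j) • e p

variable (u : κ → ι → ℝ) {e : κ → E}

theorem sumSquares_mem : sumSquares u e ∈ symmetricForms ι E :=
  fun i j => by simp only [sumSquares, mul_comm]

theorem inner_sumSquares (he : Orthonormal ℝ e) (i j : ι) (p : κ) :
    ⟪sumSquares u e i j, e p⟫ = u p i * u p j := by
  simpa [sumSquares] using he.inner_left_fintype (fun p => u p i * u p j) p

theorem gaussForm_sumSquares (he : Orthonormal ℝ e) :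
    gaussForm (sumSquares u e) (sumSquares u e) = 0 := by
  funext i j k l
  simp only [gaussForm, sumSquares, he.inner_sum, conj_trivial, ← Finset.sum_sub_distrib,
    Pi.zero_apply]
  exact Finset.sum_eq_zero fun p _ => by ring

variable {n : ℕ}

def pairIndicator (p : UpperPairs n) (i : Fin (n + 1)) : ℝ :=
  if i = p.1.1.castSucc ∨ i = p.1.2.castSucc then 1 else 0

theorem UpperPairs.eq_of_mem {p q : UpperPairs n} (h₁ : q.1.1 = p.1.1 ∨ q.1.1 = p.1.2)
    (h₂ : q.1.2 = p.1.1 ∨ q.1.2 = p.1.2) (hpq : q.1.1 ≠ q.1.2 ∨ p.1.1 = p.1.2) : q = p := by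
  obtain ⟨⟨a, b⟩, hab : a ≤ b⟩ := p
  obtain ⟨⟨c, d⟩, hcd : c ≤ d⟩ := q
  dsimp only at h₁ h₂ hpq
  refine Subtype.ext (Prod.ext ?_ ?_) <;> dsimp only <;> omega

theorem linearIndependent_smallComponents_sumSquares {e : UpperPairs n → E}
    (he : Orthonormal ℝ e) :
    LinearIndependent ℝ (smallComponents (sumSquares pairIndicator e)) := by
  rw [Fintype.linearIndependent_iff]
  intro g hg
  have hev : ∀ p : UpperPairs n,
      ∑ q, g q * (pairIndicator p q.1.1.castSucc * pairIndicator p q.1.2.castSucc) = 0 := by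
    intro p
    simpa [sum_inner, real_inner_smul_left, smallComponents, inner_sumSquares _ he]
      using congrArg (⟪·, e p⟫) hg
  -- `hev p` says that `g` sums to zero over the pairs `q ⊆ p`; a diagonal `p` has no other such
  -- `q`, and those of an off-diagonal `p` other than `p` itself are diagonal.
  have hsingle : ∀ p, (∀ q ≠ p, (q.1.1 = p.1.1 ∨ q.1.1 = p.1.2) →
      (q.1.2 = p.1.1 ∨ q.1.2 = p.1.2) → g q = 0) → g p = 0 := by
    intro p hother
    have := hev p
    rw [Finset.sum_eq_single p (fun q _ hqp => ?_) (by simp)] at this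
    · simpa [pairIndicator] using this
    · by_cases h₁ : q.1.1 = p.1.1 ∨ q.1.1 = p.1.2 <;> by_cases h₂ : q.1.2 = p.1.1 ∨ q.1.2 = p.1.2
      · rw [hother q hqp h₁ h₂, zero_mul]
      all_goals simp [pairIndicator, h₁, h₂]
  have hdiag : ∀ p : UpperPairs n, p.1.1 = p.1.2 → g p = 0 := fun p hp =>
    hsingle p fun q hqp h₁ h₂ => absurd (UpperPairs.eq_of_mem h₁ h₂ (Or.inr hp)) hqp
  exact fun p => hsingle p fun q hqp h₁ h₂ =>
    hdiag q (Classical.byContradiction fun hne => hqp (UpperPairs.eq_of_mem h₁ h₂ (Or.inl hne)))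

end FlatPoint

section Surjectivity

variable {E : Type*} [NormedAddCommGroup E] [InnerProductSpace ℝ E] {n : ℕ}

theorem isOpen_setOf_linearIndependent_smallComponents :
    IsOpen {h : Fin (n + 1) → Fin (n + 1) → E | LinearIndependent ℝ (smallComponents h)} :=
  isOpen_setOfPred_linearIndependent.preimage (f := smallComponents) <| continuous_pi fun _ =>
    (continuous_apply _).comp (continuous_apply _)

theorem LinearIndependent.smallComponents_smul {h : Fin (n + 1) → Fin (n + 1) → E}
    (hind : LinearIndependent ℝ (smallComponents h)) {t : ℝ} (ht : t ≠ 0) :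
    LinearIndependent ℝ (smallComponents (t • h)) :=
  hind.units_smul fun _ => Units.mk0 t ht

theorem exists_gaussForm_self_eq [FiniteDimensional ℝ E]
    (hE : (n + 1) * n / 2 ≤ Module.finrank ℝ E)
    {R : Fin (n + 1) → Fin (n + 1) → Fin (n + 1) → Fin (n + 1) → ℝ} (hR : R ∈ curvatureTensors _) :
    ∃ h ∈ symmetricForms _ E, LinearIndependent ℝ (smallComponents h) ∧ gaussForm h h = R := by
  obtain ⟨e, he⟩ := exists_orthonormal_of_card_le (E := E) (κ := UpperPairs n)
    (by rwa [card_upperPairs])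
  let S := symmetricForms (Fin (n + 1)) E
  let K := curvatureTensors (Fin (n + 1))
  let H : Set S := {y | LinearIndependent ℝ (smallComponents y.1)}
  let f : S → K := fun y => ⟨gaussForm y.1 y.1, gaussForm_self_mem y.2⟩
  let h₀ : S := ⟨sumSquares pairIndicator e, sumSquares_mem _⟩
  let f' : S →L[ℝ] K := ((gaussDeriv h₀.1).comp S.subtypeL).codRestrict K
    fun v => gaussForm_add_gaussForm_mem h₀.2 v.2
  have hh₀ : h₀ ∈ H := linearIndependent_smallComponents_sumSquares he
  have hf' : HasStrictFDerivAt f f' h₀ :=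
    ((hasStrictFDerivAt_gaussForm_self _).comp h₀ S.subtypeL.hasStrictFDerivAt).codRestrict K _ _
  have hsurj : (f' : S →ₗ[ℝ] K).range = ⊤ := by
    rw [LinearMap.range_eq_top]
    rintro ⟨R', hR'⟩
    obtain ⟨v, hv, hvR⟩ := exists_gaussForm_add_gaussForm_eq h₀.2 hh₀ hR'
    exact ⟨⟨v, hv⟩, Subtype.ext hvR⟩
  have hH : IsOpen H :=
    isOpen_setOf_linearIndependent_smallComponents.preimage continuous_subtype_val
  have hHsmul : ∀ t : ℝ, t ≠ 0 → ∀ y ∈ H, t • y ∈ H := fun _ ht _ hy =>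
    LinearIndependent.smallComponents_smul hy ht
  have hfsmul : ∀ (t : ℝ) (y : S), f (t • y) = t ^ 2 • f y := fun t y =>
    Subtype.ext (gaussForm_smul_smul t y.1)
  have hf₀ : f h₀ = 0 := Subtype.ext (gaussForm_sumSquares _ he)
  obtain ⟨⟨h, hh⟩, hind, hhR⟩ := exists_mem_eq_of_hasStrictFDerivAt_of_homogeneous hfsmul hH
    hHsmul hh₀ hf₀ hf' hsurj ⟨R, hR⟩
  exact ⟨h, hh, hind, congrArg Subtype.val hhR⟩

end Surjectivity

end Gauss

open Gauss in
/-- The Gauss map `γ(h)_{ijkl} = ⟨h_{ik}, h_{jl}⟩ - ⟨h_{il}, h_{jk}⟩`, on the open set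
`H` of `W`-valued symmetric bilinear forms `h` on `ℝ^m` (`W = ℝ^r`,
`r ≥ m(m-1)/2`) whose components `{h_{ij} : 1 ≤ i ≤ j ≤ m-1}` are linearly independent,
is a surjective submersion onto the space `K_m` of algebraic curvature tensors:
every `R ∈ K_m` is a value `γ(h)`, and at every such `h` the differential of `γ`
(restricted to the symmetric forms) maps onto `K_m`. -/
theorem gauss_map_surjective_submersion (m r : ℕ) (hr : m * (m - 1) / 2 ≤ r)
    (Sym : Submodule ℝ (Fin m → Fin m → EuclideanSpace ℝ (Fin r)))
    (hSym : ∀ h, h ∈ Sym ↔ ∀ i j, h i j = h j i)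
    (K : Submodule ℝ (Fin m → Fin m → Fin m → Fin m → ℝ))
    (hK : ∀ R, R ∈ K ↔
      ((∀ i j k l, R i j k l = R k l i j) ∧
       (∀ i j k l, R i j k l = - R j i k l) ∧
       (∀ i j k l, R i j k l + R k i j l + R j k i l = 0)))
    (γ : (Fin m → Fin m → EuclideanSpace ℝ (Fin r)) →
      (Fin m → Fin m → Fin m → Fin m → ℝ))
    (hγ : ∀ h i j k l, γ h i j k l =
      (inner ℝ (h i k) (h j l) : ℝ) - (inner ℝ (h i l) (h j k) : ℝ))
    (Indep : (Fin m → Fin m → EuclideanSpace ℝ (Fin r)) → Prop)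
    (hIndep : ∀ h, Indep h ↔ LinearIndependent ℝ
      (fun q : {q : Fin (m - 1) × Fin (m - 1) // q.1 ≤ q.2} =>
        h (Fin.castLE (Nat.sub_le m 1) q.1.1) (Fin.castLE (Nat.sub_le m 1) q.1.2))) :
    (∀ R ∈ K, ∃ h ∈ Sym, Indep h ∧ γ h = R) ∧
    (∀ h ∈ Sym, Indep h →
      ∀ R ∈ K, ∃ v ∈ Sym, fderiv ℝ γ h v = R) := by
  obtain rfl : γ = fun h => gaussForm h h := by ext h i j k l; exact hγ h i j k l
  obtain rfl : Sym = symmetricForms _ _ := SetLike.ext hSym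
  obtain rfl : K = curvatureTensors _ := SetLike.ext hK
  cases m with
  | zero =>
    refine ⟨fun R _ => ⟨0, zero_mem _, (hIndep 0).mpr ?_, Subsingleton.elim _ _⟩,
      fun h _ _ R _ => ⟨0, zero_mem _, Subsingleton.elim _ _⟩⟩
    have : IsEmpty {q : Fin 0 × Fin 0 // q.1 ≤ q.2} := ⟨fun q => q.1.1.elim0⟩
    exact linearIndependent_empty_type
  | succ n =>
    refine ⟨fun R hR => ?_, fun h hh hind R hR => ?_⟩
    · obtain ⟨h, hh, hind, hhR⟩ :=
        exists_gaussForm_self_eq (E := EuclideanSpace ℝ (Fin r)) (by simpa using hr) hR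
      exact ⟨h, hh, (hIndep h).mpr hind, hhR⟩
    · obtain ⟨v, hv, hvR⟩ := exists_gaussForm_add_gaussForm_eq hh ((hIndep h).mp hind) hR
      refine ⟨v, hv, ?_⟩
      rw [(hasStrictFDerivAt_gaussForm_self h).hasFDerivAt.fderiv, gaussDeriv_apply, hvR]
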